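/- Suppose condition (C) holds, let φ be a character of A, and let Ω ⊆ E_k be an open connected set such that for every a ∈ E_k the intersection Ω ∩ (a + M_φ) is path-connected. Let Φ : Ω → A be locally bounded in Ω and differentiable in the sense of Gâteaux at every point of Ω. Then for all ζ₁, ζ₂ ∈ Ω with ζ₂ − ζ₁ ∈ M_φ one has φ(Φ(ζ₂)) = φ(Φ(ζ₁)). -/

import Mathlib

/-! If `h ∈ M_φ`, the Gâteaux quotients of `φ ∘ Φ` at `ζ` in the directions `h` and `-h` tend to
`±φ(h) φ(Φ'(ζ)) = 0`, so `t ↦ φ(Φ(ζ + t h))` has derivative zero and `φ ∘ Φ` is constant on every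
segment of `Ω` with direction in `M_φ`. Hence `φ ∘ Φ` is locally constant on each slice
`Ω ∩ (a + M_φ)`, and so constant along the path that joins `ζ₁` to `ζ₂` in such a slice. -/

open Filter Topology

/-- Local boundedness of `Φ` on `Ω`: every point of `Ω` has a neighborhood in `Ω`
on which `Φ` is bounded. -/
def IsLocBoundedOn {A : Type*} [NormedCommRing A] [NormedAlgebra ℂ A]
    {E : Submodule ℝ A} (Ω : Set E) (Φ : E → A) : Prop :=
  ∀ ζ ∈ Ω, ∃ r > (0 : ℝ), ∃ C : ℝ, ∀ z ∈ Ω, ‖z - ζ‖ < r → ‖Φ z‖ ≤ C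

/-- Differentiability in the sense of Gâteaux at `ζ` with Gâteaux derivative `g`:
for every `h ∈ E`, `(Φ(ζ + δ h) - Φ(ζ))/δ → h * g` as the real `δ → 0⁺`. -/
def GateauxDiffAt {A : Type*} [NormedCommRing A] [NormedAlgebra ℂ A]
    {E : Submodule ℝ A} (Φ : E → A) (ζ : E) (g : A) : Prop :=
  ∀ h : E, Tendsto (fun δ : ℝ => δ⁻¹ • (Φ (ζ + δ • h) - Φ ζ))
    (𝓝[>] (0 : ℝ)) (𝓝 ((h : A) * g))

/-- Differentiability in the sense of Lorch at `ζ` (relative to `Ω`) with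
Lorch derivative `L`. -/
def LorchDiffAt {A : Type*} [NormedCommRing A] [NormedAlgebra ℂ A]
    {E : Submodule ℝ A} (Ω : Set E) (Φ : E → A) (ζ : E) (L : A) : Prop :=
  ∀ ε > (0 : ℝ), ∃ δ > (0 : ℝ), ∀ h : E, ‖h‖ < δ → ζ + h ∈ Ω →
    ‖Φ (ζ + h) - Φ ζ - (h : A) * L‖ ≤ ε * ‖h‖

/-- Condition (C): every character of `A` maps `E` onto all of `ℂ`. -/
def CondC {A : Type*} [NormedCommRing A] [NormedAlgebra ℂ A]
    (E : Submodule ℝ A) : Prop :=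
  ∀ φ : A →ₐ[ℂ] ℂ, Function.Surjective fun x : E => φ (x : A)

theorem hasDerivAt_of_tendsto_slope_nhdsGT {F : Type*} [NormedAddCommGroup F] [NormedSpace ℝ F]
    {f : ℝ → F} {f' : F} {x : ℝ}
    (hright : Tendsto (fun δ : ℝ => δ⁻¹ • (f (x + δ) - f x)) (𝓝[>] 0) (𝓝 f'))
    (hleft : Tendsto (fun δ : ℝ => δ⁻¹ • (f (x - δ) - f x)) (𝓝[>] 0) (𝓝 (-f'))) :
    HasDerivAt f f' x := by
  rw [hasDerivAt_iff_tendsto_slope_zero, ← nhdsLT_sup_nhdsGT, tendsto_sup]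
  refine ⟨?_, hright⟩
  have hneg : Tendsto (fun δ : ℝ => -δ) (𝓝[<] 0) (𝓝[>] 0) := by
    simpa using tendsto_neg_nhdsLT (a := (0 : ℝ))
  have hlim := hleft.neg.comp hneg
  rw [neg_neg] at hlim
  refine hlim.congr fun δ => ?_
  simp only [Function.comp_apply, sub_neg_eq_add, inv_neg, neg_smul, neg_neg]

section Character

variable {A : Type*} [NormedCommRing A] [NormedAlgebra ℂ A] {E : Submodule ℝ A}
  {φ : A →ₐ[ℂ] ℂ} {Φ : E → A}

theorem GateauxDiffAt.tendsto_slope_map_of_map_eq_zero {ζ : E} {g : A} (hΦ : GateauxDiffAt Φ ζ g)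
    (hφ : Continuous φ) {h : E} (hh : φ (h : A) = 0) :
    Tendsto (fun δ : ℝ => δ⁻¹ • (φ (Φ (ζ + δ • h)) - φ (Φ ζ))) (𝓝[>] 0) (𝓝 0) := by
  have hlim := (hφ.tendsto _).comp (hΦ h)
  rw [map_mul, hh, zero_mul] at hlim
  refine hlim.congr fun δ => ?_
  simp only [Function.comp_apply, AlgHom.map_smul_of_tower, map_sub]

theorem GateauxDiffAt.hasDerivAt_map_line {p h : E} {t : ℝ} {g : A}
    (hΦ : GateauxDiffAt Φ (p + t • h) g) (hφ : Continuous φ) (hh : φ (h : A) = 0) :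
    HasDerivAt (fun s : ℝ => φ (Φ (p + s • h))) 0 t := by
  refine hasDerivAt_of_tendsto_slope_nhdsGT ?_ ?_
  · refine (hΦ.tendsto_slope_map_of_map_eq_zero hφ hh).congr fun δ => ?_
    rw [show p + (t + δ) • h = p + t • h + δ • h by module]
  · rw [neg_zero]
    refine (hΦ.tendsto_slope_map_of_map_eq_zero hφ (h := -h) (by simp [hh])).congr fun δ => ?_
    rw [show p + (t - δ) • h = p + t • h + δ • -h by module]

variable {Ω : Set E} {Φ' : E → A}

theorem map_eq_of_segment_subset (hG : ∀ ζ ∈ Ω, GateauxDiffAt Φ ζ (Φ' ζ)) (hφ : Continuous φ)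
    {p q : E} (hpq : segment ℝ p q ⊆ Ω) (hφpq : φ ((q : A) - p) = 0) : φ (Φ q) = φ (Φ p) := by
  have hline : ∀ t ∈ Set.Icc (0 : ℝ) 1,
      HasDerivAt (fun s : ℝ => φ (Φ (p + s • (q - p)))) 0 t := fun t ht =>
    (hG _ (hpq (segment_eq_image' ℝ p q ▸ ⟨t, ht, rfl⟩))).hasDerivAt_map_line hφ hφpq
  have hconst := constant_of_has_deriv_right_zero
    (fun t ht => (hline t ht).continuousAt.continuousWithinAt)
    (fun t ht => (hline t (Set.Ico_subset_Icc_self ht)).hasDerivWithinAt) 1 (by simp)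
  simpa using hconst

theorem eventually_map_eq_of_map_sub_eq_zero (hG : ∀ ζ ∈ Ω, GateauxDiffAt Φ ζ (Φ' ζ))
    (hφ : Continuous φ) (hΩ : IsOpen Ω) {x : E} (hx : x ∈ Ω) :
    ∀ᶠ p : E in 𝓝 x, φ ((p : A) - x) = 0 → φ (Φ p) = φ (Φ x) := by
  obtain ⟨r, hr, hball⟩ := Metric.isOpen_iff.mp hΩ x hx
  filter_upwards [Metric.ball_mem_nhds x hr] with p hp
  exact map_eq_of_segment_subset hG hφ
    (((convex_ball x r).segment_subset (Metric.mem_ball_self hr) hp).trans hball)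

end Character

theorem JoinedIn.apply_eq_of_eventually_eq {X Y : Type*} [TopologicalSpace X] {F : Set X}
    {g : X → Y} (hg : ∀ x ∈ F, ∀ᶠ p in 𝓝[F] x, g p = g x) {x y : X} (hxy : JoinedIn F x y) :
    g y = g x := by
  obtain ⟨γ, hγ⟩ := hxy
  have hloc : IsLocallyConstant (g ∘ γ) := by
    refine (IsLocallyConstant.iff_eventually_eq _).mpr fun t => ?_
    have hγt : Tendsto γ (𝓝 t) (𝓝[F] (γ t)) :=
      tendsto_nhdsWithin_iff.mpr ⟨γ.continuous.continuousAt, Eventually.of_forall hγ⟩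
    exact hγt.eventually (hg _ (hγ t))
  simpa using hloc.apply_eq_of_preconnectedSpace 1 0

/-- Lemma 2: under condition (C), if all intersections of the open connected set
`Ω` with translates of `M_φ = {ζ ∈ E_k : φ(ζ) = 0}` are path-connected, and `Φ` is
locally bounded and Gâteaux differentiable in `Ω`, then `φ ∘ Φ` is constant along
`M_φ`-directions: `ζ₂ - ζ₁ ∈ M_φ` implies `φ(Φ(ζ₂)) = φ(Φ(ζ₁))`. -/
theorem gateaux_constant_along_Mphi
    {A : Type*} [NormedCommRing A] [NormedAlgebra ℂ A] [FiniteDimensional ℂ A]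
    {k : ℕ} (e : Fin k → A)
    (φ : A →ₐ[ℂ] ℂ)
    (Ω : Set (Submodule.span ℝ (Set.range e))) (hΩ : IsOpen Ω)
    (hslice : ∀ a : Submodule.span ℝ (Set.range e),
      ∀ ζ₁ ∈ Ω ∩ ((fun m => a + m) ''
        {m : Submodule.span ℝ (Set.range e) | φ (m : A) = 0}),
      ∀ ζ₂ ∈ Ω ∩ ((fun m => a + m) ''
        {m : Submodule.span ℝ (Set.range e) | φ (m : A) = 0}),
        JoinedIn (Ω ∩ ((fun m => a + m) ''
          {m : Submodule.span ℝ (Set.range e) | φ (m : A) = 0})) ζ₁ ζ₂)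
    (Φ Φ' : Submodule.span ℝ (Set.range e) → A)
    (hG : ∀ ζ ∈ Ω, GateauxDiffAt Φ ζ (Φ' ζ)) :
    ∀ ζ₁ ∈ Ω, ∀ ζ₂ ∈ Ω, φ ((ζ₂ : A) - (ζ₁ : A)) = 0 →
      φ (Φ ζ₂) = φ (Φ ζ₁) := by
  intro ζ₁ hζ₁ ζ₂ hζ₂ hζ₁₂
  have hφ : Continuous φ := φ.toLinearMap.continuous_of_finiteDimensional
  set S := Ω ∩ ((fun m => ζ₁ + m) '' {m : Submodule.span ℝ (Set.range e) | φ (m : A) = 0})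
  have hS : ∀ x ∈ S, ∀ y ∈ S, φ ((y : A) - x) = 0 := by
    rintro _ ⟨-, m, hm, rfl⟩ _ ⟨-, n, hn, rfl⟩
    simp_all
  have hpath : JoinedIn S ζ₁ ζ₂ :=
    hslice ζ₁ ζ₁ ⟨hζ₁, 0, by simp, by simp⟩ ζ₂ ⟨hζ₂, ζ₂ - ζ₁, by simpa using hζ₁₂, by simp⟩
  refine hpath.apply_eq_of_eventually_eq (g := fun x => φ (Φ x)) fun x hx => ?_
  filter_upwards [nhdsWithin_le_nhds (eventually_map_eq_of_map_sub_eq_zero hG hφ hΩ hx.1),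
    self_mem_nhdsWithin] with p hp hpS
  exact hp (hS x hx p hpS)
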